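/- arXiv:1211.2340 — 5 statements merged into one kernel-verified Lean document; each statement's English description precedes it below -/
import Mathlib

section
/- For all subsets G, H ⊆ B, N(G·H) = N(G)·N(H), where G·H denotes the setwise product {gh : g ∈ G, h ∈ H} and N(S) = {e ∈ B : ∃ b ∈ S, e⁻ = b⁺}. -/
open Pointwise

/-- Left-state homomorphism of a subdirect product `B ≤ Σ × A × Σ`. -/
def leftHom {S A : Type*} [Group S] [Group A] (B : Subgroup (S × A × S)) :
    ↥B →* S :=
  (MonoidHom.fst S (A × S)).comp B.subtype

/-- Right-state homomorphism of a subdirect product `B ≤ Σ × A × Σ`. -/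
def rightHom {S A : Type*} [Group S] [Group A] (B : Subgroup (S × A × S)) :
    ↥B →* S :=
  ((MonoidHom.snd A S).comp (MonoidHom.snd S (A × S))).comp B.subtype

/-- The next-branch set of a subset of branches. -/
def nextSet {S A : Type*} [Group S] [Group A] (B : Subgroup (S × A × S))
    (H : Set ↥B) : Set ↥B :=
  {e : ↥B | ∃ b ∈ H, leftHom B e = rightHom B b}

/- `nextSet B H` is the preimage under `e ↦ e⁻` of the image of `H` under `b ↦ b⁺`. Images under a
homomorphism always commute with setwise products, and preimages do so as soon as the
homomorphism is surjective, as `e ↦ e⁻` is on `B`. -/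

theorem Set.preimage_mul_of_surjective {G K F : Type*} [Group G] [Group K] [FunLike F G K]
    [MonoidHomClass F G K] {f : F} (hf : Function.Surjective f) (s t : Set K) :
    f ⁻¹' (s * t) = f ⁻¹' s * f ⁻¹' t := by
  refine subset_antisymm ?_ (Set.preimage_mul_preimage_subset f)
  rintro x ⟨a, ha, b, hb, hx⟩
  obtain ⟨y, rfl⟩ := hf a
  refine ⟨y, ha, y⁻¹ * x, ?_, mul_inv_cancel_left y x⟩
  simpa [Set.mem_preimage, map_mul, map_inv, ← hx] using hb

section

variable {S A : Type*} [Group S] [Group A] (B : Subgroup (S × A × S))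

theorem nextSet_eq_preimage_image (H : Set ↥B) :
    nextSet B H = leftHom B ⁻¹' (rightHom B '' H) := by
  ext e
  simp only [nextSet, Set.mem_ofPred_eq, Set.mem_preimage, Set.mem_image, eq_comm]

theorem leftHom_surjective (h : ∀ s : S, ∃ b ∈ B, b.1 = s) :
    Function.Surjective (leftHom B) := fun s =>
  let ⟨b, hb, hbs⟩ := h s
  ⟨⟨b, hb⟩, hbs⟩

end

theorem stmt3_general {S A : Type*} [Group S] [Group A] (B : Subgroup (S × A × S))
    (h1 : ∀ s : S, ∃ b ∈ B, b.1 = s) :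
    ∀ G H : Set ↥B, nextSet B (G * H) = nextSet B G * nextSet B H := by
  intro G H
  simp only [nextSet_eq_preimage_image, Set.image_mul,
    Set.preimage_mul_of_surjective (leftHom_surjective B h1)]

theorem stmt3 {S A : Type*} [Group S] [Group A] (B : Subgroup (S × A × S))
    (h1 : ∀ s : S, ∃ b ∈ B, b.1 = s)
    (h2 : ∀ a : A, ∃ b ∈ B, b.2.1 = a)
    (h3 : ∀ s : S, ∃ b ∈ B, b.2.2 = s) :
    ∀ G H : Set ↥B, nextSet B (G * H) = nextSet B G * nextSet B H :=
  stmt3_general B h1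
end

section
/- The twisted product ⊗ makes the set X₀ × X₁ × ⋯ × X_ℓ into a group: each component (x ⊗ y)_j lies in X_j (so ⊗ is well-defined), ⊗ is associative, the tuple (1, …, 1) is a two-sided identity, and every tuple has a two-sided inverse. -/
/-- `tailProd x j = S_j(x) = x_{j+1} x_{j+2} ⋯ x_ℓ` (with `tailProd x ℓ = 1`). -/
def tailProd {B : Type*} [Group B] {n : ℕ} (x : Fin n → B) (j : Fin n) : B :=
  ((List.ofFn x).drop ((j : ℕ) + 1)).prod

/-- The twisted product: `(x ⊗ y)_j = x_j · S_j(x) y_j S_j(x)⁻¹`. -/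
def twmul {B : Type*} [Group B] {n : ℕ} (x y : Fin n → B) : Fin n → B :=
  fun j => x j * (tailProd x j * y j * (tailProd x j)⁻¹)


/-!
Write `P_j(x) = x_j S_j(x) = x_j x_{j+1} ⋯ x_ℓ`. Then `P_j(x ⊗ y) = P_j(x) P_j(y)`: the conjugation by
`S_j(x)` in `(x ⊗ y)_j` is undone by the factor `S_j(x)` of `S_j(x ⊗ y) = S_j(x) S_j(y)`. This
multiplicativity of the tail products gives associativity, and the inverse of `x` is
`y_j = S_j(x)⁻¹ x_j⁻¹ S_j(x)`, which lies in `X_j` because `X_j` is normal.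
-/

section TwistedProduct

variable {B : Type*} [Group B] {n : ℕ}

def twinv (x : Fin n → B) : Fin n → B :=
  fun j => (tailProd x j)⁻¹ * (x j)⁻¹ * tailProd x j

lemma tailProd_one (j : Fin n) : tailProd (fun _ : Fin n => (1 : B)) j = 1 :=
  List.prod_eq_one fun a ha => by
    obtain ⟨i, rfl⟩ := List.mem_ofFn.mp (List.mem_of_mem_drop ha)
    rfl

lemma twmul_one_left (x : Fin n → B) : twmul (fun _ => (1 : B)) x = x := by
  funext j
  simp [twmul, tailProd_one]

lemma twmul_one_right (x : Fin n → B) : twmul x (fun _ => (1 : B)) = x := by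
  funext j
  simp [twmul]

lemma prod_drop_ofFn_twmul (x y : Fin n → B) (k : ℕ) :
    ((List.ofFn (twmul x y)).drop k).prod
      = ((List.ofFn x).drop k).prod * ((List.ofFn y).drop k).prod := by
  by_cases hk : k < n
  · rw [List.drop_eq_getElem_cons (l := List.ofFn (twmul x y)) (by simpa using hk),
      List.drop_eq_getElem_cons (l := List.ofFn x) (by simpa using hk),
      List.drop_eq_getElem_cons (l := List.ofFn y) (by simpa using hk),
      List.prod_cons, List.prod_cons, List.prod_cons, prod_drop_ofFn_twmul x y (k + 1)]
    simp only [List.getElem_ofFn, twmul, tailProd]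
    group
  · simp [List.drop_eq_nil_of_le, not_lt.mp hk]
termination_by n - k

lemma tailProd_twmul (x y : Fin n → B) (j : Fin n) :
    tailProd (twmul x y) j = tailProd x j * tailProd y j :=
  prod_drop_ofFn_twmul x y (j + 1)

lemma twmul_assoc (x y z : Fin n → B) : twmul (twmul x y) z = twmul x (twmul y z) := by
  funext j
  simp only [twmul, tailProd_twmul]
  group

lemma twmul_twinv (x : Fin n → B) : twmul x (twinv x) = fun _ => 1 := by
  funext j
  simp only [twmul, twinv]
  group

lemma twmul_eq_one_symm {x y : Fin n → B} (h : twmul x y = fun _ => 1) :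
    twmul y x = fun _ => 1 := by
  have hy (j : Fin n) : y j = (tailProd x j)⁻¹ * (x j)⁻¹ * tailProd x j :=
    calc y j = (tailProd x j)⁻¹ * (x j)⁻¹ * twmul x y j * tailProd x j := by
          simp only [twmul]; group
      _ = (tailProd x j)⁻¹ * (x j)⁻¹ * tailProd x j := by rw [h]; group
  have hS (j : Fin n) : tailProd y j = (tailProd x j)⁻¹ := by
    have := tailProd_twmul x y j
    rw [h, tailProd_one] at this
    exact (inv_eq_of_mul_eq_one_right this.symm).symm
  funext j
  simp only [twmul, hS, hy]
  group

lemma twmul_mem {H : Subgroup B} [H.Normal] {x y : Fin n → B} {j : Fin n}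
    (hx : x j ∈ H) (hy : y j ∈ H) : twmul x y j ∈ H :=
  mul_mem hx (Subgroup.Normal.conj_mem ‹_› _ hy _)

lemma twinv_mem {H : Subgroup B} [H.Normal] {x : Fin n → B} {j : Fin n}
    (hx : x j ∈ H) : twinv x j ∈ H := by
  simpa [twinv] using Subgroup.Normal.conj_mem ‹_› _ (inv_mem hx) (tailProd x j)⁻¹

end TwistedProduct

theorem stmt9_general {B : Type*} [Group B] (ℓ : ℕ) (X : Fin (ℓ + 1) → Subgroup B)
    (hnorm : ∀ j : Fin (ℓ + 1), (X j).Normal) :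
    -- closure: the twisted product is well defined on X₀ × X₁ × ⋯ × X_ℓ
    (∀ x y : Fin (ℓ + 1) → B, (∀ j, x j ∈ X j) → (∀ j, y j ∈ X j) →
        ∀ j, twmul x y j ∈ X j) ∧
    -- associativity
    (∀ x y z : Fin (ℓ + 1) → B, twmul (twmul x y) z = twmul x (twmul y z)) ∧
    -- two-sided identity
    (∀ x : Fin (ℓ + 1) → B,
        twmul (fun _ => (1 : B)) x = x ∧ twmul x (fun _ => (1 : B)) = x) ∧
    -- two-sided inverses
    (∀ x : Fin (ℓ + 1) → B, (∀ j, x j ∈ X j) →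
        ∃ y : Fin (ℓ + 1) → B, (∀ j, y j ∈ X j) ∧
          twmul x y = (fun _ => (1 : B)) ∧ twmul y x = (fun _ => (1 : B))) :=
  ⟨fun _ _ hx hy j => have := hnorm j; twmul_mem (hx j) (hy j),
    twmul_assoc,
    fun x => ⟨twmul_one_left x, twmul_one_right x⟩,
    fun x hx => ⟨twinv x, fun j => have := hnorm j; twinv_mem (hx j),
      twmul_twinv x, twmul_eq_one_symm (twmul_twinv x)⟩⟩

theorem stmt9 {B : Type*} [Group B] (ℓ : ℕ) (X : Fin (ℓ + 1) → Subgroup B)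
    (hmono : ∀ j k : Fin (ℓ + 1), j ≤ k → X j ≤ X k)
    (htop : X (Fin.last ℓ) = ⊤)
    (hnorm : ∀ j : Fin (ℓ + 1), (X j).Normal) :
    -- closure: the twisted product is well defined on X₀ × X₁ × ⋯ × X_ℓ
    (∀ x y : Fin (ℓ + 1) → B, (∀ j, x j ∈ X j) → (∀ j, y j ∈ X j) →
        ∀ j, twmul x y j ∈ X j) ∧
    -- associativity
    (∀ x y z : Fin (ℓ + 1) → B, twmul (twmul x y) z = twmul x (twmul y z)) ∧
    -- two-sided identity
    (∀ x : Fin (ℓ + 1) → B,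
        twmul (fun _ => (1 : B)) x = x ∧ twmul x (fun _ => (1 : B)) = x) ∧
    -- two-sided inverses
    (∀ x : Fin (ℓ + 1) → B, (∀ j, x j ∈ X j) →
        ∃ y : Fin (ℓ + 1) → B, (∀ j, y j ∈ X j) ∧
          twmul x y = (fun _ => (1 : B)) ∧ twmul y x = (fun _ => (1 : B))) :=
  stmt9_general ℓ X hnorm
end

section
/- Fix g ∈ B and a tuple x with x_j ∈ X_j and x₀x₁⋯x_ℓ = g. For every h ∈ B, the map y ↦ x ⊗ y is a bijection from S_h = {y : y_j ∈ X_j, ∏ y_j = h} onto S_{gh} = {z : z_j ∈ X_j, ∏ z_j = gh}. -/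
/-- The expansion class `S_g`: tuples with `x_j ∈ X_j` and `x₀x₁⋯x_ℓ = g`. -/
def expClass {B : Type*} [Group B] (ℓ : ℕ) (X : Fin (ℓ + 1) → Subgroup B)
    (g : B) : Set (Fin (ℓ + 1) → B) :=
  {x | (∀ j, x j ∈ X j) ∧ (List.ofFn x).prod = g}

/-!
The map `y ↦ x ⊗ y` has the componentwise inverse `z_j ↦ S_j(x)⁻¹ (x_j⁻¹ z_j) S_j(x)`, and both
maps preserve the conditions `y_j ∈ X_j` because each `X_j` is normal. The twisted product is
multiplicative, `∏ (x ⊗ y) = ∏ x · ∏ y`: since `S_0(x) = ∏_{j ≥ 1} x_j`, the first factor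
`x_0 S_0(x) y_0 S_0(x)⁻¹` followed by `∏_{j ≥ 1} x_j · ∏_{j ≥ 1} y_j` (induction) telescopes.
-/

section TwistedProduct

variable {B : Type*} [Group B] {n : ℕ}

def twmulInv (x z : Fin n → B) : Fin n → B :=
  fun j => (tailProd x j)⁻¹ * ((x j)⁻¹ * z j) * tailProd x j

lemma twmul_twmulInv (x z : Fin n → B) : twmul x (twmulInv x z) = z := by
  funext j
  simp only [twmul, twmulInv]
  group

lemma twmulInv_twmul (x y : Fin n → B) : twmulInv x (twmul x y) = y := by
  funext j
  simp only [twmul, twmulInv]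
  group

lemma tailProd_zero (x : Fin (n + 1) → B) : tailProd x 0 = (List.ofFn (Fin.tail x)).prod := by
  simp only [tailProd, List.ofFn_succ, Fin.val_zero, List.drop_succ_cons, List.drop_zero]
  rfl

lemma tailProd_succ (x : Fin (n + 1) → B) (j : Fin n) :
    tailProd x j.succ = tailProd (Fin.tail x) j := by
  simp only [tailProd, List.ofFn_succ, List.drop_succ_cons, Fin.val_succ]
  rfl

lemma tail_twmul (x y : Fin (n + 1) → B) :
    Fin.tail (twmul x y) = twmul (Fin.tail x) (Fin.tail y) := by
  funext j
  simp only [Fin.tail, twmul, tailProd_succ]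

lemma prod_ofFn_twmul : ∀ {n : ℕ} (x y : Fin n → B),
    (List.ofFn (twmul x y)).prod = (List.ofFn x).prod * (List.ofFn y).prod
  | 0, _, _ => by simp
  | n + 1, x, y => by
    have ih := prod_ofFn_twmul (Fin.tail x) (Fin.tail y)
    rw [← tail_twmul] at ih
    simp only [List.ofFn_succ, List.prod_cons] at ih ⊢
    change _ * (List.ofFn (Fin.tail (twmul x y))).prod =
      _ * (List.ofFn (Fin.tail x)).prod * (_ * (List.ofFn (Fin.tail y)).prod)
    rw [ih, twmul, tailProd_zero]
    group

lemma twmulInv_mem {H : Subgroup B} [H.Normal] {x z : Fin n → B} {j : Fin n}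
    (hx : x j ∈ H) (hz : z j ∈ H) : twmulInv x z j ∈ H := by
  simpa only [twmulInv, inv_inv] using
    Subgroup.Normal.conj_mem ‹_› _ (mul_mem (inv_mem hx) hz) (tailProd x j)⁻¹

end TwistedProduct

section ExpansionClass

variable {B : Type*} [Group B] {ℓ : ℕ} {X : Fin (ℓ + 1) → Subgroup B}
  [∀ j, (X j).Normal] {g h : B} {x : Fin (ℓ + 1) → B}

lemma twmul_mapsTo (hx : x ∈ expClass ℓ X g) :
    Set.MapsTo (twmul x) (expClass ℓ X h) (expClass ℓ X (g * h)) := by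
  rintro y ⟨hyX, rfl⟩
  exact ⟨fun j => twmul_mem (hx.1 j) (hyX j), by rw [prod_ofFn_twmul, hx.2]⟩

lemma twmulInv_mapsTo (hx : x ∈ expClass ℓ X g) :
    Set.MapsTo (twmulInv x) (expClass ℓ X (g * h)) (expClass ℓ X h) := by
  rintro z ⟨hzX, hz⟩
  refine ⟨fun j => twmulInv_mem (hx.1 j) (hzX j), mul_left_cancel (a := g) ?_⟩
  rw [← hx.2, ← prod_ofFn_twmul, twmul_twmulInv, hz, hx.2]

end ExpansionClass

theorem stmt11_general {B : Type*} [Group B] (ℓ : ℕ) (X : Fin (ℓ + 1) → Subgroup B)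
    (hnorm : ∀ j : Fin (ℓ + 1), (X j).Normal)
    (g h : B) (x : Fin (ℓ + 1) → B) (hx : x ∈ expClass ℓ X g) :
    Set.BijOn (fun y => twmul x y) (expClass ℓ X h) (expClass ℓ X (g * h)) :=
  Set.InvOn.bijOn ⟨fun y _ => twmulInv_twmul x y, fun z _ => twmul_twmulInv x z⟩
    (twmul_mapsTo hx) (twmulInv_mapsTo hx)

theorem stmt11 {B : Type*} [Group B] (ℓ : ℕ) (X : Fin (ℓ + 1) → Subgroup B)
    (hmono : ∀ j k : Fin (ℓ + 1), j ≤ k → X j ≤ X k)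
    (htop : X (Fin.last ℓ) = ⊤)
    (hnorm : ∀ j : Fin (ℓ + 1), (X j).Normal)
    (g h : B) (x : Fin (ℓ + 1) → B) (hx : x ∈ expClass ℓ X g) :
    Set.BijOn (fun y => twmul x y) (expClass ℓ X h) (expClass ℓ X (g * h)) :=
  stmt11_general ℓ X hnorm g h x hx
end

section
/- Let A₀, …, A_ℓ be nonempty finite sets. The number of bijective upper-triangular self-maps of ∏_{j=0}^{ℓ} A_j (maps whose j-th component depends only on coordinates j, j+1, …, ℓ) equals ∏_{j=0}^{ℓ} (|A_j|!)^{m_j}, where m_j = ∏_{i=j+1}^{ℓ} |A_i| for j < ℓ and m_ℓ = 1. -/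
/-!
A bijective upper-triangular map `φ` is the same thing as a family of permutations `A j ≃ A j`
indexed by `j` and by the tail `(a_i)_{i > j}`: the map `a_j ↦ φ(a)_j` with the tail frozen. This
map is injective because `φ` induces a surjective, hence injective, self-map of each finite tail
`∏_{i ≥ j} A_i`; conversely such a family defines an injective map by descending induction on `j`.
Counting the families gives `∏_j (|A_j|!)^{m_j}`.
-/

open Function Set Equiv

theorem Function.Surjective.eq_of_factor_eq {X Y : Type*} [Finite Y] {φ : X → X} {r : X → Y}
    (hr : Surjective r) (hφ : Surjective φ) (hφr : ∀ a b, r a = r b → r (φ a) = r (φ b))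
    {u v : X} (h : r (φ u) = r (φ v)) : r u = r v := by
  set ψ : Y → Y := r ∘ φ ∘ surjInv hr
  have hψ : ∀ a, ψ (r a) = r (φ a) := fun a => hφr _ _ (surjInv_eq hr (r a))
  have hψ_surj : Surjective ψ := by
    intro y
    obtain ⟨a, rfl⟩ := (hr.comp hφ) y
    exact ⟨r a, hψ a⟩
  exact Finite.injective_iff_surjective.mpr hψ_surj (by rw [hψ, hψ, h])

theorem Set.domRestrict_surjective {α : Type*} {π : α → Type*} [∀ a, Nonempty (π a)]
    (s : Set α) : Surjective (s.domRestrict (π := π)) := by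
  classical
  intro g
  refine ⟨fun a => if h : a ∈ s then g ⟨a, h⟩ else Classical.arbitrary _, ?_⟩
  funext a
  simp [a.2]

section UpperTriangular

variable {ι : Type*} [LinearOrder ι] {A : ι → Type*}

def IsUpperTriangular (φ : (∀ i, A i) → ∀ i, A i) : Prop :=
  ∀ a b j, (∀ i, j ≤ i → a i = b i) → φ a j = φ b j

theorem IsUpperTriangular.eq_of_forall_Ici [Finite ι] [∀ i, Finite (A i)] [∀ i, Nonempty (A i)]
    {φ : (∀ i, A i) → ∀ i, A i} (hφ : IsUpperTriangular φ) (hsurj : Surjective φ) {j : ι}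
    {u v : ∀ i, A i} (h : ∀ i, j ≤ i → φ u i = φ v i) : ∀ i, j ≤ i → u i = v i := by
  have hcompat : ∀ a b, (Ici j).domRestrict a = (Ici j).domRestrict b →
      (Ici j).domRestrict (φ a) = (Ici j).domRestrict (φ b) := fun a b hab =>
    funext fun i => hφ a b i fun k hk => congrFun hab ⟨k, le_trans i.2 hk⟩
  have key := (domRestrict_surjective (Ici j)).eq_of_factor_eq hsurj hcompat
    (funext fun i => h i i.2)
  exact fun i hi => congrFun key ⟨i, hi⟩

def triangularOfPerms (g : ∀ j, (∀ i : Ioi j, A i) → Perm (A j)) (a : ∀ i, A i) : ∀ i, A i :=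
  fun j => g j ((Ioi j).domRestrict a) (a j)

theorem isUpperTriangular_triangularOfPerms (g : ∀ j, (∀ i : Ioi j, A i) → Perm (A j)) :
    IsUpperTriangular (triangularOfPerms g) := by
  intro a b j hab
  have htail : (Ioi j).domRestrict a = (Ioi j).domRestrict b :=
    funext fun i => hab i (le_of_lt i.2)
  simp only [triangularOfPerms, htail, hab j le_rfl]

theorem injective_triangularOfPerms [WellFoundedGT ι] (g : ∀ j, (∀ i : Ioi j, A i) → Perm (A j)) :
    Injective (triangularOfPerms g) := by
  intro a b hab
  funext j
  induction j using WellFoundedGT.induction with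
  | _ j ih =>
    have htail : (Ioi j).domRestrict a = (Ioi j).domRestrict b := funext fun i => ih i i.2
    have := congrFun hab j
    simp only [triangularOfPerms, htail] at this
    exact (g j _).injective this

theorem bijective_triangularOfPerms [Finite ι] [∀ i, Finite (A i)]
    (g : ∀ j, (∀ i : Ioi j, A i) → Perm (A j)) : Bijective (triangularOfPerms g) :=
  Finite.injective_iff_bijective.mp (injective_triangularOfPerms g)

/-- The point with tail `t` above `j`, coordinate `x` at `j`, and the filler `d` below `j`. -/
def extendTail (d : ∀ i, A i) (j : ι) (t : ∀ i : Ioi j, A i) (x : A j) : ∀ i, A i :=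
  update (fun i => if h : j < i then t ⟨i, h⟩ else d i) j x

section extendTail

variable (d : ∀ i, A i) (j : ι)

@[simp]
theorem extendTail_self (t : ∀ i : Ioi j, A i) (x : A j) : extendTail d j t x j = x :=
  update_self _ _ _

@[simp]
theorem domRestrict_extendTail (t : ∀ i : Ioi j, A i) (x : A j) :
    (Ioi j).domRestrict (extendTail d j t x) = t := by
  funext i
  simp [extendTail, update_of_ne i.2.ne', mem_Ioi.mp i.2]

theorem extendTail_domRestrict_apply_of_le {a : ∀ i, A i} {i : ι} (hi : j ≤ i) :
    extendTail d j ((Ioi j).domRestrict a) (a j) i = a i := by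
  rcases hi.eq_or_lt with rfl | hlt
  · exact extendTail_self ..
  · simp [extendTail, update_of_ne hlt.ne', hlt]

end extendTail

theorem IsUpperTriangular.injective_extendTail [Finite ι] [∀ i, Finite (A i)]
    [∀ i, Nonempty (A i)] {φ : (∀ i, A i) → ∀ i, A i} (hφ : IsUpperTriangular φ)
    (hsurj : Surjective φ) (d : ∀ i, A i) (j : ι) (t : ∀ i : Ioi j, A i) :
    Injective fun x => φ (extendTail d j t x) j := by
  intro x y hxy
  have hagree : ∀ i, j ≤ i → φ (extendTail d j t x) i = φ (extendTail d j t y) i := by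
    intro i hi
    rcases hi.eq_or_lt with rfl | hlt
    · exact hxy
    refine hφ _ _ i fun k hk => ?_
    have hk' : k ∈ Ioi j := lt_of_lt_of_le hlt hk
    exact (congrFun (domRestrict_extendTail d j t x) ⟨k, hk'⟩).trans
      (congrFun (domRestrict_extendTail d j t y) ⟨k, hk'⟩).symm
  simpa using hφ.eq_of_forall_Ici hsurj hagree j le_rfl

noncomputable def permsOfTriangular [Finite ι] [∀ i, Finite (A i)] [∀ i, Nonempty (A i)]
    (φ : (∀ i, A i) → ∀ i, A i) (hφ : IsUpperTriangular φ) (hsurj : Surjective φ) :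
    ∀ j, (∀ i : Ioi j, A i) → Perm (A j) := fun j t =>
  Equiv.ofBijective _ <| Finite.injective_iff_bijective.mp <|
    hφ.injective_extendTail hsurj (Classical.arbitrary _) j t

noncomputable def permsEquivTriangular [Finite ι] [∀ i, Finite (A i)] [∀ i, Nonempty (A i)] :
    (∀ j, (∀ i : Ioi j, A i) → Perm (A j)) ≃
      {φ : (∀ i, A i) → ∀ i, A i // IsUpperTriangular φ ∧ Bijective φ} where
  toFun g := ⟨triangularOfPerms g, isUpperTriangular_triangularOfPerms g,
    bijective_triangularOfPerms g⟩
  invFun φ := permsOfTriangular φ.1 φ.2.1 φ.2.2.surjective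
  left_inv g := by
    funext j t
    ext x
    simp [permsOfTriangular, triangularOfPerms]
  right_inv φ := Subtype.ext <| funext fun a => funext fun j =>
    φ.2.1 _ _ j fun _ hi => extendTail_domRestrict_apply_of_le _ j hi

theorem card_upperTriangular_bijective [Fintype ι] [∀ i, Fintype (A i)] [∀ i, Nonempty (A i)] :
    Nat.card {φ : (∀ i, A i) → ∀ i, A i // IsUpperTriangular φ ∧ Bijective φ} =
      ∏ j, (Fintype.card (A j)).factorial ^
        ∏ i ∈ Finset.univ.filter (j < ·), Fintype.card (A i) := by
  rw [← Nat.card_congr permsEquivTriangular, Nat.card_pi]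
  refine Finset.prod_congr rfl fun j _ => ?_
  rw [Nat.card_fun, Nat.card_perm, Nat.card_pi, ← Finset.prod_subtype (p := (· ∈ Ioi j))
    (Finset.univ.filter (j < ·)) (by simp) (fun i => Nat.card (A i))]
  simp only [Nat.card_eq_fintype_card]

end UpperTriangular

theorem stmt16 (ℓ : ℕ) (A : Fin (ℓ + 1) → Type*)
    [∀ j, Fintype (A j)] [∀ j, Nonempty (A j)] :
    Nat.card {φ : (∀ j, A j) → (∀ j, A j) //
        (∀ (a b : ∀ j, A j) (j : Fin (ℓ + 1)),
          (∀ i, j ≤ i → a i = b i) → φ a j = φ b j) ∧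
        Function.Bijective φ} =
      ∏ j : Fin (ℓ + 1),
        (Nat.factorial (Fintype.card (A j))) ^
          ∏ i ∈ Finset.univ.filter (fun i : Fin (ℓ + 1) => j < i),
            Fintype.card (A i) :=
  card_upperTriangular_bijective
end

section
/- Suppose X_{j-1}(X_j ∩ Y) = X_j, suppose N satisfies N(G·H) = N(G)·N(H) for subsets, N(X_{j-1}) = X_j, N(X_j) = X_{j+1}, N(X_j ∩ Y) = N(X_j) ∩ N(Y), and N(Y) = X₀·Y' for subgroups Y, Y' of B. Then X_j(X_{j+1} ∩ Y') = X_{j+1}, provided X₀ ≤ X_j ≤ X_{j+1}. -/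
/- Apply `N` to the diagonal identity; Dedekind's modular law then pulls `X₀ ≤ X_{j+1}` out of
`X_{j+1} ∩ X₀ Y'`, and `X₀ ≤ X_j` is absorbed into `X_j`. -/

open Pointwise

theorem Subgroup.coe_mul_coe_of_le {G : Type*} [Group G] {H K : Subgroup G} (hKH : K ≤ H) :
    (H : Set G) * K = H :=
  le_antisymm ((Set.mul_subset_mul_left hKH).trans (coe_mul_coe H).le)
    (Set.subset_mul_left _ K.one_mem)

theorem stmt17 {B : Type*} [Group B]
    (N : Set B → Set B)
    (X₀ Xjm Xj Xj1 Y Y' : Subgroup B)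
    (h0j : X₀ ≤ Xj) (hjj1 : Xj ≤ Xj1)
    -- the diagonal identity X_{j-1}(X_j ∩ Y) = X_j
    (hdiag : (Xjm : Set B) * ((Xj : Set B) ∩ (Y : Set B)) = (Xj : Set B))
    -- N respects setwise products
    (hmul : ∀ G H : Set B, N (G * H) = N G * N H)
    -- N shifts the X-chain
    (hNXjm : N (Xjm : Set B) = (Xj : Set B))
    (hNXj : N (Xj : Set B) = (Xj1 : Set B))
    -- N respects this intersection
    (hNint : N ((Xj : Set B) ∩ (Y : Set B)) = N (Xj : Set B) ∩ N (Y : Set B))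
    -- N shifts the Y-chain: N(Y) = X₀ · Y'
    (hNY : N (Y : Set B) = (X₀ : Set B) * (Y' : Set B)) :
    (Xj : Set B) * ((Xj1 : Set B) ∩ (Y' : Set B)) = (Xj1 : Set B) := by
  have hNdiag : (Xj : Set B) * ((Xj1 : Set B) ∩ ((X₀ : Set B) * Y')) = Xj1 := by
    simpa only [hmul, hNXjm, hNint, hNXj, hNY] using congrArg N hdiag
  calc (Xj : Set B) * ((Xj1 : Set B) ∩ Y')
      = Xj * (X₀ * ((Y' ⊓ Xj1 : Subgroup B) : Set B)) := by
        rw [← mul_assoc, Subgroup.coe_mul_coe_of_le h0j, Subgroup.coe_inf, Set.inter_comm]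
    _ = Xj * ((Xj1 : Set B) ∩ (X₀ * Y')) := by
        rw [Subgroup.mul_inf_assoc _ _ _ (h0j.trans hjj1), Set.inter_comm]
    _ = Xj1 := hNdiag
end
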